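/- arXiv:1210.3799 — 2 statements merged into one kernel-verified Lean document; each statement's English description precedes it below -/
import Mathlib

section
/- The coefficients in the γ-expansion of the Eulerian polynomials satisfy the recurrence γ_{n+1,i} = i·γ_{n,i} + 2(n+3-2i)·γ_{n,i-1}, with γ_{1,1} = 1 and γ_{1,i} = 0 for i ≠ 1. -/
/-- Number of descents of a permutation of `Fin n`. -/
def des {n : ℕ} (π : Equiv.Perm (Fin n)) : ℕ :=
  (Finset.univ.filter fun i : Fin n => (i : ℕ) + 1 < n ∧ π (finRotate n i) < π i).card

/-- The Eulerian polynomial `A_n(t) = Σ_{π ∈ S_n} t^(des π + 1)`. -/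
noncomputable def eulerianPoly (n : ℕ) : Polynomial ℤ :=
  ∑ π : Equiv.Perm (Fin n), Polynomial.X ^ (des π + 1)

/-!
Inserting the letter `n + 1` into a permutation of `[n]` with `d` descents keeps `d` descents at
the `d + 1` positions directly after a descent or at the end, and creates one more descent at the
other `n - d` positions. Hence `A_{n+1} = (n + 1) t A_n + t (1 - t) A_n'`. This operator sends
`t^i (1+t)^(n+1-2i)` to `i t^i (1+t)^(n+2-2i) + 2 (n+1-2i) t^(i+1) (1+t)^(n-2i)`, and the family
`t^j (1+t)^(e j)` is linearly independent (compare lowest-order terms), so the coefficients of the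
two expansions of `A_{n+1}` agree.
-/

open Finset Polynomial Equiv

section Descents

variable {α : Type*} [LinearOrder α]

def descentCount {n : ℕ} (w : Fin n → α) : ℕ :=
  #{i : Fin n | (i : ℕ) + 1 < n ∧ w (finRotate n i) < w i}

theorem des_eq_descentCount {n : ℕ} (π : Equiv.Perm (Fin n)) : des π = descentCount π := rfl

theorem descentCount_comp_strictMono {β : Type*} [LinearOrder β] {f : α → β} (hf : StrictMono f)
    {n : ℕ} (w : Fin n → α) : descentCount (f ∘ w) = descentCount w := by
  simp [descentCount, hf.lt_iff_lt]

theorem descentCount_fin_one (w : Fin 1 → α) : descentCount w = 0 := by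
  simp [descentCount]

theorem descentCount_cons {n : ℕ} (a : α) (v : Fin (n + 1) → α) :
    descentCount (Fin.cons a v : Fin (n + 2) → α) = descentCount v + if v 0 < a then 1 else 0 := by
  have hrot : ∀ j : Fin (n + 1), (j : ℕ) + 1 < n + 1 →
      finRotate (n + 2) j.succ = (finRotate (n + 1) j).succ := fun j hj => by
    ext
    rw [coe_finRotate_of_ne_last, Fin.val_succ, Fin.val_succ, coe_finRotate_of_ne_last] <;>
      simp [Fin.ext_iff] <;> omega
  simp only [descentCount, card_filter, Fin.sum_univ_succ (n := n + 1)]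
  rw [add_comm]
  congr 1
  · refine sum_congr rfl fun j _ => ?_
    by_cases hj : (j : ℕ) + 1 < n + 1
    · simp [hrot j hj, show (j : ℕ) < n by omega]
    · simp [show ¬(j : ℕ) < n by omega]
  · have h0 : finRotate (n + 2) 0 = Fin.succ 0 := by simp
    simp [h0]

theorem sum_X_pow_descentCount_insertNth {R : Type*} [CommRing R] (x : α) :
    ∀ {n : ℕ} (w : Fin (n + 1) → α), (∀ i, w i < x) →
      ∑ p : Fin (n + 2), (X : R[X]) ^ descentCount (p.insertNth x w) =
        ((descentCount w : R[X]) + 1) * X ^ descentCount w +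
          ((n : R[X]) + 1 - (descentCount w : R[X])) * X ^ (descentCount w + 1)
  | 0, w, hw => by
    obtain ⟨a, v, rfl⟩ : ∃ a v, w = Fin.cons a v := ⟨w 0, Fin.tail w, (Fin.cons_self_tail w).symm⟩
    rw [Fin.sum_univ_succ, Fin.sum_univ_one, Fin.insertNth_zero', Fin.insertNth_succ_cons,
      Fin.insertNth_zero', descentCount_cons, descentCount_cons]
    have hax : a < x := hw 0
    simp only [descentCount_fin_one, Fin.cons_zero, hax, hax.not_gt, if_true, if_false]
    push_cast
    ring
  | n + 1, w, hw => by
    obtain ⟨a, v, rfl⟩ : ∃ a v, w = Fin.cons a v := ⟨w 0, Fin.tail w, (Fin.cons_self_tail w).symm⟩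
    have hax : a < x := hw 0
    have hv : ∀ i, v i < x := fun i => hw i.succ
    have ih := sum_X_pow_descentCount_insertNth (R := R) x v hv
    have hfirst : ∀ q : Fin (n + 1), q.succ.insertNth (α := fun _ => α) x v 0 = v 0 := fun q => by
      simpa only [Fin.succ_succAbove_zero] using
        Fin.insertNth_apply_succAbove (α := fun _ => α) q.succ x v 0
    have hlater : ∀ q : Fin (n + 1),
        descentCount (q.succ.succ.insertNth (α := fun _ => α) x (Fin.cons a v)) =
          descentCount (q.succ.insertNth (α := fun _ => α) x v) + if v 0 < a then 1 else 0 :=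
      fun q => by rw [Fin.insertNth_succ_cons, descentCount_cons, hfirst]
    rw [Fin.sum_univ_succ, Fin.insertNth_zero'] at ih
    rw [Fin.sum_univ_succ, Fin.sum_univ_succ, Fin.insertNth_zero', Fin.insertNth_succ_cons,
      Fin.insertNth_zero']
    simp only [hlater, pow_add, ← sum_mul, descentCount_cons, Fin.cons_zero, hax, hv 0, hax.not_gt,
      if_true, if_false, add_zero, pow_one, Nat.cast_add, Nat.cast_one] at ih ⊢
    by_cases h : v 0 < a
    · simp only [h, if_true, pow_one, Nat.cast_one]
      linear_combination X * ih
    · simp only [h, if_false, pow_zero, mul_one, add_zero, Nat.cast_zero]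
      linear_combination ih

end Descents

def insertMax {m : ℕ} (σ : Perm (Fin (m + 1))) (p : Fin (m + 2)) : Perm (Fin (m + 2)) :=
  (finSuccEquiv' p).trans (σ.optionCongr.trans (finSuccEquiv' (Fin.last _)).symm)

theorem coe_insertMax {m : ℕ} (σ : Perm (Fin (m + 1))) (p : Fin (m + 2)) :
    ⇑(insertMax σ p) = p.insertNth (Fin.last _) (Fin.castSucc ∘ σ) := by
  ext j
  induction j using p.succAboveCases <;> simp [insertMax]

theorem bijective_insertMax {m : ℕ} :
    Function.Bijective fun x : Perm (Fin (m + 1)) × Fin (m + 2) => insertMax x.1 x.2 := by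
  rw [Fintype.bijective_iff_injective_and_card]
  refine ⟨fun ⟨σ, p⟩ ⟨τ, q⟩ h => ?_, by
    simp only [Fintype.card_prod, Fintype.card_perm, Fintype.card_fin, Nat.factorial_succ]
    ring⟩
  simp only at h
  have hpq : p = q := (insertMax σ p).injective <| by
    conv_rhs => rw [h]
    simp [coe_insertMax]
  subst hpq
  have hστ : Fin.castSucc ∘ σ = Fin.castSucc ∘ τ := by
    simpa [coe_insertMax] using congrArg (⇑) h
  simp [Equiv.ext_iff, fun i => Fin.castSucc_injective _ (congrFun hστ i)]

section EulerOperator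

variable {R : Type*} [CommRing R]

noncomputable def eulerOp (n : ℕ) : R[X] →ₗ[R] R[X] :=
  LinearMap.mulLeft R (((n : R[X]) + 1) * X) + LinearMap.mulLeft R (X * (1 - X)) ∘ₗ derivative

theorem eulerOp_apply (n : ℕ) (f : R[X]) :
    eulerOp n f = ((n : R[X]) + 1) * X * f + X * (1 - X) * derivative f := rfl

theorem eulerOp_X_pow (n d : ℕ) :
    eulerOp n (X ^ (d + 1) : R[X]) =
      ((d : R[X]) + 1) * X ^ (d + 1) + ((n : R[X]) - (d : R[X])) * X ^ (d + 2) := by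
  simp only [eulerOp_apply, derivative_X_pow_succ, map_add, map_natCast, map_one]
  ring

end EulerOperator

theorem eulerianPoly_one : eulerianPoly 1 = X := by
  simp [eulerianPoly, des]

theorem eulerianPoly_succ {n : ℕ} (hn : 1 ≤ n) :
    eulerianPoly (n + 1) = eulerOp n (eulerianPoly n) := by
  obtain ⟨m, rfl⟩ := Nat.exists_eq_add_of_le' hn
  rw [eulerianPoly, ← bijective_insertMax.sum_comp, Fintype.sum_prod_type, eulerianPoly, map_sum]
  refine sum_congr rfl fun σ _ => ?_
  have hσ : descentCount (Fin.castSucc ∘ σ) = des σ :=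
    descentCount_comp_strictMono Fin.strictMono_castSucc σ
  rw [sum_congr rfl fun p _ => by rw [des_eq_descentCount, coe_insertMax, pow_succ], ← sum_mul,
    sum_X_pow_descentCount_insertNth _ (Fin.castSucc ∘ σ) fun i => Fin.castSucc_lt_last _, hσ,
    eulerOp_X_pow]
  push_cast
  ring

section GammaBasis

variable {R : Type*} [CommRing R]

-- For `n + 1 < 2 * i` the truncated exponent is `0`; such `i` only ever carry coefficient `0`.
variable (R) in
noncomputable def gammaBasis (n i : ℕ) : R[X] := X ^ i * (1 + X) ^ (n + 1 - 2 * i)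

theorem eulerOp_gammaBasis {n i : ℕ} (h : 2 * i ≤ n + 1) :
    eulerOp n (gammaBasis R n i) =
      (i : R) • gammaBasis R (n + 1) i +
        (2 * ((n : R) + 1 - 2 * i)) • gammaBasis R (n + 1) (i + 1) := by
  obtain ⟨e, he⟩ : ∃ e, n + 1 = 2 * i + e := ⟨n + 1 - 2 * i, by omega⟩
  have hnR : ((n : R) + 1) = 2 * i + e := by simpa using congrArg (Nat.cast : ℕ → R) he
  have hnX : ((n : R[X]) + 1) = 2 * i + e := by simpa using congrArg (Nat.cast : ℕ → R[X]) he
  simp only [gammaBasis, eulerOp_apply, smul_eq_C_mul, show n + 1 - 2 * i = e by omega,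
    show n + 1 + 1 - 2 * i = e + 1 by omega, show n + 1 + 1 - 2 * (i + 1) = e - 1 by omega, hnR,
    hnX]
  rcases i with _ | i <;> rcases e with _ | e <;>
    simp [derivative_mul, derivative_pow, map_ofNat] <;> ring

theorem linearIndependent_X_pow_mul {q : ℕ → R[X]} (hq : ∀ j, (q j).coeff 0 = 1) :
    LinearIndependent R fun j => X ^ j * q j := by
  rw [linearIndependent_iff']
  intro s g hg i
  induction i using Nat.strong_induction_on with
  | _ i ih =>
    intro hi
    have hcoeff := congrArg (coeff · i) hg
    simp only [finsetSum_coeff, coeff_smul, coeff_zero] at hcoeff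
    rwa [sum_eq_single i, coeff_X_pow_mul', if_pos le_rfl, Nat.sub_self, hq, smul_eq_mul,
      mul_one] at hcoeff
    · intro j hj hji
      rcases lt_or_gt_of_ne hji with hlt | hgt
      · simp [ih j hlt hj]
      · simp [coeff_X_pow_mul', hgt.not_ge]
    · exact fun h => absurd hi h

theorem linearIndependent_gammaBasis (n : ℕ) : LinearIndependent R (gammaBasis R n) :=
  linearIndependent_X_pow_mul fun j => by simp [coeff_zero_eq_eval_zero]

theorem eulerOp_sum_smul_gammaBasis {n N : ℕ} {a : ℕ → R} (ha₀ : a 0 = 0)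
    (ha : ∀ i, n + 1 < 2 * i → a i = 0) (hN : n + 1 < 2 * N) :
    eulerOp n (∑ i ∈ range N, a i • gammaBasis R n i) =
      ∑ i ∈ range (N + 1),
        ((i : R) * a i + 2 * ((n : R) + 3 - 2 * i) * a (i - 1)) • gammaBasis R (n + 1) i := by
  have hterm : ∀ i, a i • eulerOp n (gammaBasis R n i) =
      (i * a i) • gammaBasis R (n + 1) i +
        (2 * ((n : R) + 1 - 2 * i) * a i) • gammaBasis R (n + 1) (i + 1) := fun i => by
    by_cases hi : 2 * i ≤ n + 1
    · rw [eulerOp_gammaBasis hi, smul_add, smul_smul, smul_smul, mul_comm (a i), mul_comm (a i)]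
    · simp [ha i (by omega)]
  simp only [add_smul, sum_add_distrib, map_sum, map_smul, hterm]
  rw [sum_range_succ, sum_range_succ', ha N hN, ha₀]
  simp only [mul_zero, zero_smul, add_zero, Nat.add_sub_cancel]
  congr 1
  refine sum_congr rfl fun i _ => ?_
  congr 2
  push_cast
  ring

end GammaBasis

/-- The coefficients `γ n i` of the (unique) expansion of `A_n(t)` in the basis
`{t^i (1+t)^(n+1-2i)}_{1 ≤ i ≤ ⌈n/2⌉}` (vanishing outside that range) satisfy the
recurrence `γ_{n+1,i} = i γ_{n,i} + 2(n+3-2i) γ_{n,i-1}`, with `γ_{1,1} = 1` and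
`γ_{1,i} = 0` for `i ≠ 1`. -/
theorem stmt_3 (γ : ℕ → ℕ → ℤ)
    (hexp : ∀ n : ℕ, 1 ≤ n →
      eulerianPoly n =
        ∑ i ∈ Finset.Icc 1 ((n + 1) / 2),
          Polynomial.C (γ n i) * Polynomial.X ^ i * (1 + Polynomial.X) ^ (n + 1 - 2 * i))
    (hvanish : ∀ n i : ℕ, 1 ≤ n → (i = 0 ∨ (n + 1) / 2 < i) → γ n i = 0) :
    (γ 1 1 = 1 ∧ ∀ i : ℕ, i ≠ 1 → γ 1 i = 0) ∧
    ∀ n : ℕ, 1 ≤ n → ∀ i : ℕ, 1 ≤ i →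
      γ (n + 1) i = (i : ℤ) * γ n i + 2 * ((n : ℤ) + 3 - 2 * i) * γ n (i - 1) := by
  have hsum : ∀ n N, 1 ≤ n → n + 1 < 2 * N →
      eulerianPoly n = ∑ i ∈ range N, γ n i • gammaBasis ℤ n i := by
    intro n N hn hN
    simp only [hexp n hn, gammaBasis, smul_eq_C_mul, ← mul_assoc]
    refine sum_subset (fun i hi => ?_) (fun i _ hi => ?_)
    · simp only [mem_Icc, mem_range] at hi ⊢
      omega
    · simp only [mem_Icc, not_and_or, not_le] at hi
      simp [hvanish n i hn (by omega)]
  refine ⟨⟨?_, fun i hi => hvanish 1 i le_rfl (by omega)⟩, fun n hn i hi => ?_⟩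
  · simpa [eulerianPoly_one] using hexp 1 le_rfl
  · -- any `N` past the support of `γ n` works; this one also puts `i` in `range (N + 1)`
    set N := n + i + 2
    have hrec : ∑ j ∈ range (N + 1), γ (n + 1) j • gammaBasis ℤ (n + 1) j =
        ∑ j ∈ range (N + 1), ((j : ℤ) * γ n j + 2 * ((n : ℤ) + 3 - 2 * j) * γ n (j - 1)) •
          gammaBasis ℤ (n + 1) j := by
      rw [← hsum (n + 1) (N + 1) (by omega) (by omega), eulerianPoly_succ hn,
        hsum n N hn (by omega),
        eulerOp_sum_smul_gammaBasis (hvanish n 0 hn (.inl rfl))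
          (fun j hj => hvanish n j hn (.inr (by omega))) (by omega)]
    exact linearIndependent_iff'ₛ.mp (linearIndependent_gammaBasis (n + 1)) _ _ _ hrec i
      (mem_range.mpr (by omega))
end

section
/- For n ≥ 2, the four-variable polynomial satisfies n·A_n(s,t;x,y) = (n-1)(s-x)(t-y)·A_{n-1}(s,t;x,y) + s·t·x·y·(∂/∂s + ∂/∂x)(∂/∂t + ∂/∂y)A_{n-1}(s,t;x,y), with A_1(s,t;x,y) = stxy. -/
open MvPolynomial

/-- The four-variable polynomial `A_n(s,t;x,y)` with `s = X 0`, `t = X 1`,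
`x = X 2`, `y = X 3`. -/
noncomputable def fourVarEulerian (n : ℕ) : MvPolynomial (Fin 4) ℤ :=
  ∑ π : Equiv.Perm (Fin n),
    X 0 ^ (des π⁻¹ + 1) * X 1 ^ (des π + 1) * X 2 ^ (n - des π⁻¹) * X 3 ^ (n - des π)

/-!
Every permutation of `Fin (n + 1)` arises in exactly `n + 1` ways by inserting a new letter, at
some position `p` and with some value `v`, into a permutation `σ` of `Fin n`. Such an insertion
raises `des` by `desJump σ p v ∈ {0, 1}`, and since it commutes with inversion it raises `des σ⁻¹`
by `desJump σ⁻¹ v p`. So the monomials of all insertions into `σ` sum to the monomial of `σ`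
times a polynomial whose coefficients are `∑ desJump σ p v`, `∑ desJump σ⁻¹ v p` and
`∑ desJump σ p v * desJump σ⁻¹ v p`. Written on the padded words of `σ` and `σ⁻¹`, which are
mutually inverse maps of `{0, …, n + 1}`, these sums telescope, and they give exactly the
coefficients of `n (s - x)(t - y) + s t x y (∂_s + ∂_x)(∂_t + ∂_y)` applied to that monomial.
-/

open Equiv Finset

section PaddedWord

variable {m : ℕ}

/-- The one-line word of `σ` with values shifted to `1, …, m`, framed by `m + 1` in front and by
`0` at the end (and beyond). -/
def paddedWord (σ : Perm (Fin m)) (p : ℕ) : ℕ :=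
  if p = 0 then m + 1 else if h : p - 1 < m then σ ⟨p - 1, h⟩ + 1 else 0

@[simp]
lemma paddedWord_zero (σ : Perm (Fin m)) : paddedWord σ 0 = m + 1 := by
  simp [paddedWord]

lemma paddedWord_succ (σ : Perm (Fin m)) {p : ℕ} (h : p < m) :
    paddedWord σ (p + 1) = σ ⟨p, h⟩ + 1 := by
  simp [paddedWord, h]

lemma paddedWord_of_lt (σ : Perm (Fin m)) {p : ℕ} (h : m < p) : paddedWord σ p = 0 := by
  simp [paddedWord, show p ≠ 0 by omega, show ¬p - 1 < m by omega]

lemma paddedWord_le (σ : Perm (Fin m)) (p : ℕ) : paddedWord σ p ≤ m + 1 := by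
  unfold paddedWord
  split_ifs with _ h
  · rfl
  · have := (σ ⟨p - 1, h⟩).isLt
    omega
  · omega

lemma paddedWord_inv_paddedWord (σ : Perm (Fin m)) {p : ℕ} (h : p ≤ m + 1) :
    paddedWord σ⁻¹ (paddedWord σ p) = p := by
  rcases p with _ | q
  · exact paddedWord_of_lt _ (by simp)
  · rcases Nat.lt_or_ge q m with hq | hq
    · rw [paddedWord_succ σ hq, paddedWord_succ σ⁻¹ (σ ⟨q, hq⟩).isLt, Fin.eta,
        Perm.inv_def, symm_apply_apply]
    · rw [paddedWord_of_lt σ (by omega), paddedWord_zero]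
      omega

lemma paddedWord_succ_ne (σ : Perm (Fin m)) {p : ℕ} (h : p ≤ m) :
    paddedWord σ (p + 1) ≠ paddedWord σ p := fun heq => by
  have := congrArg (paddedWord σ⁻¹) heq
  rw [paddedWord_inv_paddedWord σ (by omega), paddedWord_inv_paddedWord σ (by omega)] at this
  omega

end PaddedWord

section Descents

variable {M : ℕ}

lemma des_add_two_eq_sum (σ : Perm (Fin (M + 1))) :
    des σ + 2 =
      ∑ p ∈ range (M + 2), if paddedWord σ (p + 1) < paddedWord σ p then 1 else 0 := by
  have step : ∀ i : Fin (M + 1),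
      (if paddedWord σ (i + 2) < paddedWord σ (i + 1) then 1 else 0) =
        (if (i : ℕ) + 1 < M + 1 ∧ σ (finRotate (M + 1) i) < σ i then 1 else 0) +
          if i = Fin.last M then 1 else 0 := by
    intro i
    rcases eq_or_ne i (Fin.last M) with rfl | hi
    · simp [paddedWord_of_lt σ (show M + 1 < M + 2 by omega), paddedWord_succ σ (lt_add_one M)]
    · have hiM : (i : ℕ) < M := Fin.val_lt_last hi
      have hrot : finRotate (M + 1) i = ⟨i + 1, by omega⟩ := Fin.ext (coe_finRotate_of_ne_last hi)
      simp only [paddedWord_succ σ (show (i : ℕ) + 1 < M + 1 by omega), paddedWord_succ σ i.is_lt,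
        hrot, hi, Fin.lt_def, if_false, add_zero, hiM, Nat.add_lt_add_iff_right, true_and]
  rw [sum_range_succ', ← Fin.sum_univ_eq_sum_range, sum_congr rfl fun i _ => step i,
    sum_add_distrib, ← card_filter, sum_ite_eq', if_pos (mem_univ _)]
  have hfirst : paddedWord σ (0 + 1) < paddedWord σ 0 := by
    rw [paddedWord_succ σ (Nat.succ_pos M), paddedWord_zero]
    omega
  rw [if_pos hfirst, des]

def ascent (σ : Perm (Fin M)) (p : ℕ) : ℤ :=
  if paddedWord σ p < paddedWord σ (p + 1) then 1 else 0

lemma sum_ascent (σ : Perm (Fin (M + 1))) :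
    ∑ p ∈ range (M + 2), ascent σ p = M - des σ := by
  have hdes := des_add_two_eq_sum σ
  have hflip : ∀ p ∈ range (M + 2), ascent σ p =
      1 - ((if paddedWord σ (p + 1) < paddedWord σ p then 1 else 0 : ℕ) : ℤ) := by
    intro p hp
    have := paddedWord_succ_ne σ (by simpa [Nat.lt_succ_iff] using hp)
    unfold ascent
    split_ifs <;> omega
  rw [sum_congr rfl hflip, sum_sub_distrib, ← Nat.cast_sum, ← hdes]
  simp

lemma des_le (σ : Perm (Fin (M + 1))) : des σ ≤ M := by
  have := sum_ascent σ
  have : 0 ≤ ∑ p ∈ range (M + 2), ascent σ p :=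
    sum_nonneg fun p _ => by unfold ascent; split_ifs <;> omega
  omega

end Descents

section Insertion

variable {m : ℕ}

/-- Insert a new letter at position `p` with value `v`, shifting the other positions and values
past `p` and `v` up by one. -/
def insertAt (σ : Perm (Fin m)) (p v : Fin (m + 1)) : Perm (Fin (m + 1)) :=
  ((finSuccEquiv' p).trans (Equiv.optionCongr σ)).trans (finSuccEquiv' v).symm

@[simp]
lemma insertAt_apply_self (σ : Perm (Fin m)) (p v : Fin (m + 1)) : insertAt σ p v p = v := by
  simp [insertAt]

@[simp]
lemma insertAt_apply_succAbove (σ : Perm (Fin m)) (p v : Fin (m + 1)) (i : Fin m) :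
    insertAt σ p v (p.succAbove i) = v.succAbove (σ i) := by
  simp [insertAt, finSuccEquiv'_succAbove]

lemma insertAt_inv (σ : Perm (Fin m)) (p v : Fin (m + 1)) :
    (insertAt σ p v)⁻¹ = insertAt σ⁻¹ v p := by
  ext x
  simp [insertAt, Perm.inv_def]

lemma insertAt_bijective :
    Function.Bijective fun x : Perm (Fin m) × Fin (m + 1) × Fin (m + 1) =>
      (insertAt x.1 x.2.1 x.2.2, x.2.1) := by
  rw [Fintype.bijective_iff_injective_and_card]
  refine ⟨?_, by
    simp only [Fintype.card_prod, Fintype.card_perm, Fintype.card_fin, Nat.factorial_succ]; ring⟩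
  rintro ⟨σ, p, v⟩ ⟨σ', p', v'⟩ h
  simp only [Prod.mk.injEq] at h
  obtain ⟨hins, rfl⟩ := h
  obtain rfl : v = v' := by
    rw [← insertAt_apply_self σ p v, ← insertAt_apply_self σ' p v', hins]
  obtain rfl : σ = σ' := by
    ext i
    have := DFunLike.congr_fun hins (p.succAbove i)
    rw [insertAt_apply_succAbove, insertAt_apply_succAbove] at this
    rw [Fin.succAbove_right_injective this]
  rfl

lemma card_smul_sum_eq_sum_insertAt {β : Type*} [AddCommMonoid β] (f : Perm (Fin (m + 1)) → β) :
    (m + 1) • ∑ π, f π = ∑ σ, ∑ p, ∑ v, f (insertAt σ p v) := by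
  calc (m + 1) • ∑ π, f π = ∑ x : Perm (Fin (m + 1)) × Fin (m + 1), f x.1 := by
        simp [Fintype.sum_prod_type, smul_sum]
    _ = ∑ x : Perm (Fin m) × Fin (m + 1) × Fin (m + 1), f (insertAt x.1 x.2.1 x.2.2) :=
        (Fintype.sum_bijective _ insertAt_bijective _ _ fun _ => rfl).symm
    _ = ∑ σ, ∑ p, ∑ v, f (insertAt σ p v) := by simp only [Fintype.sum_prod_type]

def shiftAbove (v u : ℕ) : ℕ := if u ≤ v then u else u + 1

lemma val_succAbove_add_one (v : Fin (m + 1)) (j : Fin m) :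
    (v.succAbove j : ℕ) + 1 = shiftAbove v (j + 1) := by
  unfold shiftAbove
  rcases lt_or_ge j.castSucc v with h | h
  · rw [Fin.succAbove_of_castSucc_lt _ _ h, if_pos (by simpa [Fin.lt_def] using h)]
    rfl
  · rw [Fin.succAbove_of_le_castSucc _ _ h,
      if_neg (by simp only [Fin.le_def, Fin.val_castSucc] at h; omega)]
    rfl

lemma paddedWord_insertAt_of_le (σ : Perm (Fin m)) (p v : Fin (m + 1)) {x : ℕ} (hx : x ≤ p) :
    paddedWord (insertAt σ p v) x = shiftAbove v (paddedWord σ x) := by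
  rcases x with _ | y
  · simp [shiftAbove, v.is_le]
  · have hy : y < m := by omega
    have hpos : (⟨y, by omega⟩ : Fin (m + 1)) = p.succAbove ⟨y, hy⟩ := by
      rw [Fin.succAbove_of_castSucc_lt _ _ (by simp only [Fin.castSucc_mk, Fin.lt_def]; omega)]
      rfl
    rw [paddedWord_succ _ (by omega), hpos, insertAt_apply_succAbove, val_succAbove_add_one,
      paddedWord_succ σ hy]

lemma paddedWord_insertAt_succ_self (σ : Perm (Fin m)) (p v : Fin (m + 1)) :
    paddedWord (insertAt σ p v) (p + 1) = v + 1 := by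
  simp [paddedWord_succ _ p.is_lt]

lemma paddedWord_insertAt_of_lt (σ : Perm (Fin m)) (p v : Fin (m + 1)) {x : ℕ} (hx : p < x) :
    paddedWord (insertAt σ p v) (x + 1) = shiftAbove v (paddedWord σ x) := by
  rcases Nat.lt_or_ge x (m + 1) with hxm | hxm
  · obtain ⟨y, rfl⟩ : ∃ y, x = y + 1 := ⟨x - 1, by omega⟩
    have hy : y < m := by omega
    have hpos : (⟨y + 1, hxm⟩ : Fin (m + 1)) = p.succAbove ⟨y, hy⟩ := by
      rw [Fin.succAbove_of_le_castSucc _ _ (by simp only [Fin.castSucc_mk, Fin.le_def]; omega)]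
      rfl
    rw [paddedWord_succ _ hxm, hpos, insertAt_apply_succAbove, val_succAbove_add_one,
      paddedWord_succ σ hy]
  · rw [paddedWord_of_lt _ (by omega), paddedWord_of_lt σ (by omega)]
    simp [shiftAbove]

end Insertion

lemma sum_range_succ_add_eq_of_shift {β : Type*} [AddCommMonoid β] {f g : ℕ → β} {p N : ℕ}
    (hp : p < N) (hlt : ∀ x < p, f x = g x) (hgt : ∀ x, p < x → f (x + 1) = g x) :
    ∑ x ∈ range (N + 1), f x + g p = ∑ x ∈ range N, g x + f p + f (p + 1) := by
  induction N, hp using Nat.le_induction with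
  | base =>
    rw [sum_range_succ, sum_range_succ, sum_range_succ,
      sum_congr rfl fun x hx => hlt x (mem_range.1 hx)]
    abel
  | succ N hN ih =>
    rw [sum_range_succ, sum_range_succ g, hgt N hN, add_right_comm, ih]
    abel

section DescentJump

variable {m M : ℕ}

def exceeds (σ : Perm (Fin m)) (p v : ℕ) : ℤ :=
  if v < paddedWord σ p then 1 else 0

def crossing (σ : Perm (Fin m)) (p v : ℕ) : ℤ :=
  exceeds σ p v - exceeds σ (p + 1) v

/-- The new letter sits between positions `p` and `p + 1` of the padded word, at a height between
`v` and `v + 1`: at an ascent it adds a descent unless it lies between the two neighbouring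
letters, at a descent it adds one exactly when it does. -/
def desJump (σ : Perm (Fin m)) (p v : ℕ) : ℤ :=
  ascent σ p + crossing σ p v

lemma desJump_eq_zero_or_one (σ : Perm (Fin m)) (p v : ℕ) :
    desJump σ p v = 0 ∨ desJump σ p v = 1 := by
  unfold desJump ascent crossing exceeds
  split_ifs <;> omega

lemma des_insertAt (σ : Perm (Fin (M + 1))) (p v : Fin (M + 2)) :
    (des (insertAt σ p v) : ℤ) = des σ + desJump σ p v := by
  set w := paddedWord (insertAt σ p v)
  have key := sum_range_succ_add_eq_of_shift (p := p) (N := M + 2)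
    (f := fun x => if w (x + 1) < w x then 1 else 0)
    (g := fun x => if paddedWord σ (x + 1) < paddedWord σ x then 1 else 0) p.is_lt
    (fun x hx => by
      simp only [w, paddedWord_insertAt_of_le σ p v (x := x) (by omega),
        paddedWord_insertAt_of_le σ p v (x := x + 1) (by omega), shiftAbove]
      split_ifs <;> omega)
    (fun x hx => by
      simp only [w, paddedWord_insertAt_of_lt σ p v hx,
        paddedWord_insertAt_of_lt σ p v (x := x + 1) (by omega), shiftAbove]
      split_ifs <;> omega)
  rw [← des_add_two_eq_sum σ, ← des_add_two_eq_sum (insertAt σ p v)] at key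
  simp only [w, paddedWord_insertAt_succ_self, paddedWord_insertAt_of_le σ p v le_rfl,
    paddedWord_insertAt_of_lt σ p v (lt_add_one _)] at key
  have := paddedWord_succ_ne σ (Nat.lt_succ_iff.1 p.is_lt)
  unfold desJump ascent crossing exceeds
  unfold shiftAbove at key
  split_ifs at key ⊢ <;> omega

lemma sum_crossing_range (σ : Perm (Fin m)) {v : ℕ} (hv : v ≤ m) (c : ℕ) :
    ∑ p ∈ range c, crossing σ p v = 1 - exceeds σ c v := by
  simp only [crossing]
  rw [sum_range_sub' (exceeds σ · v), exceeds, paddedWord_zero, if_pos (by omega)]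

lemma sum_crossing (σ : Perm (Fin m)) {v : ℕ} (hv : v ≤ m) :
    ∑ p ∈ range (m + 1), crossing σ p v = 1 := by
  rw [sum_crossing_range σ hv, exceeds, paddedWord_of_lt σ (lt_add_one m)]
  simp

lemma sum_crossing_mul_exceeds_inv (σ : Perm (Fin m)) {v v' : ℕ} (hv : v ≤ m)
    (hv' : v' ≤ m + 1) :
    ∑ p ∈ range (m + 1), crossing σ p v * exceeds σ⁻¹ v' p = 1 - if v < v' then 1 else 0 := by
  set c := paddedWord σ⁻¹ v'
  have hc : c ≤ m + 1 := paddedWord_le σ⁻¹ v'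
  have hrange : (range (m + 1)).filter (· < c) = range c := by
    ext p
    simp only [mem_filter, mem_range]
    omega
  simp only [exceeds, mul_ite, mul_one, mul_zero]
  rw [← sum_filter, hrange, sum_crossing_range σ hv, exceeds,
    show paddedWord σ c = v' by simpa using paddedWord_inv_paddedWord σ⁻¹ hv']

lemma sum_crossing_mul_crossing_inv (σ : Perm (Fin m)) {v : ℕ} (hv : v ≤ m) :
    ∑ p ∈ range (m + 1), crossing σ p v * crossing σ⁻¹ v p = 1 := by
  have hsplit : ∀ p, crossing σ p v * crossing σ⁻¹ v p =
      crossing σ p v * exceeds σ⁻¹ v p - crossing σ p v * exceeds σ⁻¹ (v + 1) p :=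
    fun p => mul_sub _ _ _
  rw [sum_congr rfl fun p _ => hsplit p, sum_sub_distrib,
    sum_crossing_mul_exceeds_inv σ hv (by omega), sum_crossing_mul_exceeds_inv σ hv (by omega)]
  simp

lemma sum_sum_desJump (σ : Perm (Fin (M + 1))) :
    ∑ p ∈ range (M + 2), ∑ v ∈ range (M + 2), desJump σ p v = (M + 2) * (M + 1 - des σ) := by
  have hcol : ∀ v ∈ range (M + 2), ∑ p ∈ range (M + 2), crossing σ p v = 1 := fun v hv =>
    sum_crossing σ (Nat.lt_succ_iff.1 (mem_range.1 hv))
  simp only [desJump, sum_add_distrib, sum_const, card_range, nsmul_eq_mul]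
  rw [sum_comm, sum_congr rfl hcol, ← mul_sum, sum_ascent]
  simp only [Nat.cast_add, Nat.cast_ofNat, sum_const, card_range, Int.nsmul_eq_mul, mul_one]
  ring

lemma sum_sum_desJump_mul_desJump_inv (σ : Perm (Fin (M + 1))) :
    ∑ p ∈ range (M + 2), ∑ v ∈ range (M + 2), desJump σ p v * desJump σ⁻¹ v p =
      (M + 1 - des σ) * (M + 1 - des σ⁻¹) + M + 1 := by
  have hcol : ∀ v ∈ range (M + 2), ∑ p ∈ range (M + 2), crossing σ p v = 1 := fun v hv =>
    sum_crossing σ (Nat.lt_succ_iff.1 (mem_range.1 hv))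
  have hrow : ∀ p ∈ range (M + 2), ∑ v ∈ range (M + 2), crossing σ⁻¹ v p = 1 := fun p hp =>
    sum_crossing σ⁻¹ (Nat.lt_succ_iff.1 (mem_range.1 hp))
  have hcross : ∀ v ∈ range (M + 2), ∑ p ∈ range (M + 2), crossing σ p v * crossing σ⁻¹ v p = 1 :=
    fun v hv => sum_crossing_mul_crossing_inv σ (Nat.lt_succ_iff.1 (mem_range.1 hv))
  have hasc : ∑ p ∈ range (M + 2), ∑ v ∈ range (M + 2), ascent σ p * ascent σ⁻¹ v =
      (M - des σ) * (M - des σ⁻¹) := by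
    rw [← sum_mul_sum, sum_ascent, sum_ascent]
  have hasc_cross : ∑ p ∈ range (M + 2), ∑ v ∈ range (M + 2), ascent σ p * crossing σ⁻¹ v p =
      M - des σ := by
    rw [← sum_ascent σ]
    exact sum_congr rfl fun p hp => by rw [← mul_sum, hrow p hp, mul_one]
  have hcross_asc : ∑ p ∈ range (M + 2), ∑ v ∈ range (M + 2), crossing σ p v * ascent σ⁻¹ v =
      M - des σ⁻¹ := by
    rw [sum_comm, ← sum_ascent σ⁻¹]
    exact sum_congr rfl fun v hv => by rw [← sum_mul, hcol v hv, one_mul]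
  have hcross_cross : ∑ p ∈ range (M + 2), ∑ v ∈ range (M + 2),
      crossing σ p v * crossing σ⁻¹ v p = M + 2 := by
    rw [sum_comm, sum_congr rfl hcross]
    simp
  simp only [desJump, add_mul, mul_add, sum_add_distrib]
  rw [hasc, hasc_cross, hcross_asc, hcross_cross]
  ring

end DescentJump

lemma sum_sum_add_mul_mul_add_mul {ι κ R : Type*} [CommRing R] (s : Finset ι) (t : Finset κ)
    (e f : ι → κ → R) (x y u w : R) :
    ∑ i ∈ s, ∑ j ∈ t, (x + e i j * u) * (y + f i j * w) =
      (#s * #t : ℕ) * (x * y) + (∑ i ∈ s, ∑ j ∈ t, e i j) * (y * u) +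
        (∑ i ∈ s, ∑ j ∈ t, f i j) * (x * w) + (∑ i ∈ s, ∑ j ∈ t, e i j * f i j) * (u * w) := by
  have expand : ∀ i j, (x + e i j * u) * (y + f i j * w) =
      x * y + e i j * (y * u) + f i j * (x * w) + e i j * f i j * (u * w) := fun _ _ => by ring
  simp only [expand, sum_add_distrib, ← sum_mul, sum_const, nsmul_eq_mul]
  push_cast
  ring

lemma pow_mul_pow_of_eq_add {R : Type*} [CommRing R] (s x : R) {a d n : ℕ} {e : ℤ} (ha : a ≤ n)
    (he : e = 0 ∨ e = 1) (hd : (d : ℤ) = a + e) :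
    s ^ (d + 1) * x ^ (n + 1 - d) = s ^ (a + 1) * x ^ (n - a) * (x + e * (s - x)) := by
  rcases he with rfl | rfl
  · obtain rfl : d = a := by omega
    rw [show n + 1 - d = n - d + 1 by omega]
    push_cast
    ring
  · obtain rfl : d = a + 1 := by omega
    rw [show n + 1 - (a + 1) = n - a by omega]
    push_cast
    ring

section EulerianPolynomial

variable {M : ℕ}

noncomputable def eulerTerm {n : ℕ} (π : Perm (Fin n)) : MvPolynomial (Fin 4) ℤ :=
  X 0 ^ (des π⁻¹ + 1) * X 1 ^ (des π + 1) * X 2 ^ (n - des π⁻¹) * X 3 ^ (n - des π)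

lemma fourVarEulerian_eq_sum_eulerTerm (n : ℕ) :
    fourVarEulerian n = ∑ π : Perm (Fin n), eulerTerm π :=
  rfl

lemma eulerTerm_insertAt (σ : Perm (Fin (M + 1))) (p v : Fin (M + 2)) :
    eulerTerm (insertAt σ p v) =
      eulerTerm σ * ((X 3 + (desJump σ p v : MvPolynomial (Fin 4) ℤ) * (X 1 - X 3)) *
        (X 2 + (desJump σ⁻¹ v p : MvPolynomial (Fin 4) ℤ) * (X 0 - X 2))) := by
  have hinv := des_insertAt σ⁻¹ v p
  rw [← insertAt_inv] at hinv
  have h02 := pow_mul_pow_of_eq_add (X 0 : MvPolynomial (Fin 4) ℤ) (X 2)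
    ((des_le σ⁻¹).trans M.le_succ) (desJump_eq_zero_or_one _ _ _) hinv
  have h13 := pow_mul_pow_of_eq_add (X 1 : MvPolynomial (Fin 4) ℤ) (X 3)
    ((des_le σ).trans M.le_succ) (desJump_eq_zero_or_one _ _ _) (des_insertAt σ p v)
  unfold eulerTerm
  linear_combination (X 1 ^ (des (insertAt σ p v) + 1) * X 3 ^ (M + 1 + 1 - des (insertAt σ p v)))
    * h02 + (X 0 ^ (des σ⁻¹ + 1) * X 2 ^ (M + 1 - des σ⁻¹) *
      (X 2 + (desJump σ⁻¹ v p : MvPolynomial (Fin 4) ℤ) * (X 0 - X 2))) * h13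

noncomputable def eulerOperator (F : MvPolynomial (Fin 4) ℤ) : MvPolynomial (Fin 4) ℤ :=
  X 0 * X 1 * X 2 * X 3 *
    (pderiv 0 (pderiv 1 F + pderiv 3 F) + pderiv 2 (pderiv 1 F + pderiv 3 F))

lemma eulerOperator_sum {ι : Type*} (s : Finset ι) (F : ι → MvPolynomial (Fin 4) ℤ) :
    eulerOperator (∑ i ∈ s, F i) = ∑ i ∈ s, eulerOperator (F i) := by
  simp only [eulerOperator, map_sum, ← sum_add_distrib, mul_sum]

lemma eulerOperator_monomial (i j k l : ℕ) :
    eulerOperator (X 0 ^ (i + 1) * X 1 ^ (j + 1) * X 2 ^ (k + 1) * X 3 ^ (l + 1)) =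
      X 0 ^ (i + 1) * X 1 ^ (j + 1) * X 2 ^ (k + 1) * X 3 ^ (l + 1) *
        (((i : MvPolynomial (Fin 4) ℤ) + 1) * X 2 + ((k : MvPolynomial (Fin 4) ℤ) + 1) * X 0) *
        (((j : MvPolynomial (Fin 4) ℤ) + 1) * X 3 + ((l : MvPolynomial (Fin 4) ℤ) + 1) * X 1) := by
  simp only [eulerOperator, map_add, Derivation.leibniz, Derivation.leibniz_pow,
    Derivation.map_natCast, pderiv_X, Pi.single_apply, Fin.reduceEq, ↓reduceIte, smul_eq_mul,
    nsmul_eq_mul, add_tsub_cancel_right, mul_zero, mul_one, zero_add, add_zero]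
  push_cast
  ring

end EulerianPolynomial

section EulerianRecursion

variable {M : ℕ}

lemma eulerOperator_eulerTerm (σ : Perm (Fin (M + 1))) :
    eulerOperator (eulerTerm σ) = eulerTerm σ *
      (((des σ : MvPolynomial (Fin 4) ℤ) + 1) * X 3 +
        ((M + 1 - des σ : ℕ) : MvPolynomial (Fin 4) ℤ) * X 1) *
      (((des σ⁻¹ : MvPolynomial (Fin 4) ℤ) + 1) * X 2 +
        ((M + 1 - des σ⁻¹ : ℕ) : MvPolynomial (Fin 4) ℤ) * X 0) := by
  obtain ⟨k, hk⟩ : ∃ k, M + 1 - des σ⁻¹ = k + 1 := ⟨M - des σ⁻¹, by have := des_le σ⁻¹; omega⟩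
  obtain ⟨l, hl⟩ : ∃ l, M + 1 - des σ = l + 1 := ⟨M - des σ, by have := des_le σ; omega⟩
  rw [eulerTerm, hk, hl, eulerOperator_monomial]
  push_cast
  ring

lemma sum_eulerTerm_insertAt (σ : Perm (Fin (M + 1))) :
    ∑ p, ∑ v, eulerTerm (insertAt σ p v) =
      ((M + 1 : ℕ) : MvPolynomial (Fin 4) ℤ) * (X 0 - X 2) * (X 1 - X 3) * eulerTerm σ +
        eulerOperator (eulerTerm σ) := by
  have hinv : ∑ p ∈ range (M + 2), ∑ v ∈ range (M + 2), desJump σ⁻¹ v p =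
      (M + 2) * (M + 1 - des σ⁻¹) := by
    rw [sum_comm]
    exact sum_sum_desJump σ⁻¹
  calc ∑ p, ∑ v, eulerTerm (insertAt σ p v)
      = eulerTerm σ * ∑ p ∈ range (M + 2), ∑ v ∈ range (M + 2),
          (X 3 + ((desJump σ p v : ℤ) : MvPolynomial (Fin 4) ℤ) * (X 1 - X 3)) *
            (X 2 + ((desJump σ⁻¹ v p : ℤ) : MvPolynomial (Fin 4) ℤ) * (X 0 - X 2)) := by
        simp only [eulerTerm_insertAt, sum_range, mul_sum]
    _ = _ := by
        rw [sum_sum_add_mul_mul_add_mul]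
        simp only [← Int.cast_sum, ← Int.cast_mul, card_range]
        rw [hinv, sum_sum_desJump, sum_sum_desJump_mul_desJump_inv, eulerOperator_eulerTerm]
        push_cast [Nat.cast_sub ((des_le σ).trans M.le_succ),
          Nat.cast_sub ((des_le σ⁻¹).trans M.le_succ)]
        ring

end EulerianRecursion

theorem stmt_9 :
    fourVarEulerian 1 = X 0 * X 1 * X 2 * X 3 ∧
    ∀ n : ℕ, 2 ≤ n →
      (n : MvPolynomial (Fin 4) ℤ) * fourVarEulerian n =
        ((n : MvPolynomial (Fin 4) ℤ) - 1) * (X 0 - X 2) * (X 1 - X 3) *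
            fourVarEulerian (n - 1) +
          X 0 * X 1 * X 2 * X 3 *
            (pderiv 0 (pderiv 1 (fourVarEulerian (n - 1)) + pderiv 3 (fourVarEulerian (n - 1))) +
             pderiv 2 (pderiv 1 (fourVarEulerian (n - 1)) + pderiv 3 (fourVarEulerian (n - 1)))) := by
  refine ⟨by simp [fourVarEulerian, des], fun n hn => ?_⟩
  obtain ⟨M, rfl⟩ : ∃ M, n = M + 2 := ⟨n - 2, by omega⟩
  have hM : ((M + 2 : ℕ) : MvPolynomial (Fin 4) ℤ) - 1 = (M + 1 : ℕ) := by
    push_cast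
    ring
  rw [show M + 2 - 1 = M + 1 from rfl]
  change _ = _ + eulerOperator (fourVarEulerian (M + 1))
  rw [hM, ← nsmul_eq_mul, fourVarEulerian_eq_sum_eulerTerm, card_smul_sum_eq_sum_insertAt,
    fourVarEulerian_eq_sum_eulerTerm, eulerOperator_sum, mul_sum, ← sum_add_distrib]
  exact sum_congr rfl fun σ _ => sum_eulerTerm_insertAt σ
end
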